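/- Let ξ ∈ ℝ, α ∈ ℝ, and c > 0 with 6|α|c < 1, and define G: ℝ → ℝ by G(x) = x + α(x−ξ)|x−ξ| φ((x−ξ)/c). Then G is Lipschitz continuous with Lipschitz constant 1 + 6|α|c, and the inverse function G⁻¹: ℝ → ℝ is Lipschitz continuous with Lipschitz constant (1 − 6|α|c)⁻¹. -/

import Mathlib

/-- The bump function `φ(u) = (1+u)³(1-u)³` for `|u| ≤ 1` and `φ(u) = 0` otherwise. -/
noncomputable def phi (u : ℝ) : ℝ := if |u| ≤ 1 then (1 + u) ^ 3 * (1 - u) ^ 3 else 0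

/-- The transform `G(x) = x + α(x-ξ)|x-ξ| φ((x-ξ)/c)`. -/
noncomputable def transformG (ξ α c : ℝ) (x : ℝ) : ℝ :=
  x + α * ((x - ξ) * |x - ξ| * phi ((x - ξ) / c))

/-!
`G` is a perturbation `id + g` of the identity, where `g(x) = α c² H((x - ξ)/c)` for the profile
`H(t) = t|t|φ(t)`. Writing `φ(t) = max(0, 1 - t²)³`, the profile is differentiable with
`H'(t) = 2|t|(1-t²)₊³ - 6|t|³(1-t²)₊²`, so `|H'| ≤ 6` and `g` is `6|α|c`-Lipschitz.
A perturbation of the identity by a `K`-Lipschitz map with `K < 1` is `(1 + K)`-Lipschitz and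
`(1 - K)⁻¹`-antilipschitz, and it is onto by Banach's fixed point theorem; hence its inverse is
`(1 - K)⁻¹`-Lipschitz.
-/

open Filter Topology Asymptotics Function
open scoped NNReal

namespace LipschitzWith

theorem antilipschitzWith_id_add {E : Type*} [SeminormedAddCommGroup E] {K : ℝ≥0} {g : E → E}
    (hg : LipschitzWith K g) (hK : K < 1) : AntilipschitzWith (1 - K)⁻¹ fun x => x + g x := by
  simpa using AntilipschitzWith.id.add_lipschitzWith hg (by simpa using hK)

variable {E : Type*} [NormedAddCommGroup E] [CompleteSpace E] {K : ℝ≥0} {g : E → E}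

theorem surjective_id_add (hg : LipschitzWith K g) (hK : K < 1) :
    Surjective fun x => x + g x := by
  intro y
  -- a preimage of `y` is a fixed point of the contraction `x ↦ y - g x`
  have hcontr : ContractingWith K fun x => y - g x :=
    ⟨hK, by simpa using (LipschitzWith.const y).sub hg⟩
  exact ⟨_, eq_sub_iff_add_eq.mp hcontr.fixedPoint_isFixedPt.symm⟩

theorem lipschitzWith_invFun_id_add (hg : LipschitzWith K g) (hK : K < 1) :
    LipschitzWith (1 - K)⁻¹ (invFun fun x => x + g x) :=
  (hg.antilipschitzWith_id_add hK).to_rightInverse (rightInverse_invFun (hg.surjective_id_add hK))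

end LipschitzWith

theorem hasDerivAt_max_zero_pow {n : ℕ} (hn : 2 ≤ n) (t : ℝ) :
    HasDerivAt (fun s : ℝ => max 0 s ^ n) (n * max 0 t ^ (n - 1)) t := by
  rcases lt_trichotomy t 0 with ht | rfl | ht
  · have hzero : (fun s : ℝ => max 0 s ^ n) =ᶠ[𝓝 t] fun _ => 0 := by
      filter_upwards [Iio_mem_nhds ht] with s (hs : s < 0)
      rw [max_eq_left hs.le, zero_pow (by omega)]
    simpa [max_eq_left ht.le, zero_pow (by omega : n - 1 ≠ 0)] using
      (hasDerivAt_const t (0 : ℝ)).congr_of_eventuallyEq hzero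
  · -- at the kink, `|max 0 s ^ n| ≤ |s| ^ n = o(s)` because `n ≥ 2`
    rw [hasDerivAt_iff_isLittleO_nhds_zero]
    refine IsBigO.trans_isLittleO (IsBigO.of_bound 1 (Eventually.of_forall fun s => ?_))
      (isLittleO_pow_id (by omega : 1 < n))
    have hle : |max 0 s| ≤ |s| := by rcases le_total s 0 with h | h <;> simp [h]
    simpa [zero_pow (by omega : n ≠ 0), zero_pow (by omega : n - 1 ≠ 0)] using
      pow_le_pow_left₀ (abs_nonneg _) hle n
  · have hpow : (fun s : ℝ => max 0 s ^ n) =ᶠ[𝓝 t] fun s => s ^ n := by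
      filter_upwards [Ioi_mem_nhds ht] with s hs
      rw [max_eq_right (le_of_lt hs)]
    simpa [max_eq_right ht.le] using (hasDerivAt_pow n t).congr_of_eventuallyEq hpow

theorem hasDerivAt_mul_abs (t : ℝ) : HasDerivAt (fun s : ℝ => s * |s|) (2 * |t|) t := by
  have hsplit : (fun s : ℝ => s * |s|) = fun s => max 0 s ^ 2 - max 0 (-s) ^ 2 := by
    funext s
    rcases le_total 0 s with h | h
    · simp [h, abs_of_nonneg h, sq]
    · simp [h, abs_of_nonpos h, sq]
  rw [hsplit]
  refine ((hasDerivAt_max_zero_pow le_rfl t).sub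
    ((hasDerivAt_max_zero_pow le_rfl (-t)).comp t (hasDerivAt_neg t))).congr_deriv ?_
  rcases le_total 0 t with h | h
  · simp [h, abs_of_nonneg h]
  · simp [h, abs_of_nonpos h]

theorem phi_eq_max_zero_pow (t : ℝ) : phi t = max 0 (1 - t ^ 2) ^ 3 := by
  have hsq : |t| ≤ 1 ↔ t ^ 2 ≤ 1 := by rw [← sq_le_one_iff_abs_le_one]
  unfold phi
  split_ifs with h
  · rw [max_eq_right (by linarith [hsq.1 h])]; ring
  · rw [max_eq_left (by linarith [hsq.not.1 h])]; ring

theorem hasDerivAt_mul_abs_mul_phi (t : ℝ) :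
    HasDerivAt (fun s => s * |s| * phi s)
      (2 * |t| * max 0 (1 - t ^ 2) ^ 3 - 6 * |t| ^ 3 * max 0 (1 - t ^ 2) ^ 2) t := by
  simp only [phi_eq_max_zero_pow]
  have hinner : HasDerivAt (fun s : ℝ => 1 - s ^ 2) (-(2 * t)) t := by
    simpa using ((hasDerivAt_id t).pow 2).const_sub 1
  refine ((hasDerivAt_mul_abs t).mul
    ((hasDerivAt_max_zero_pow (by norm_num) _).comp t hinner)).congr_deriv ?_
  simp only [comp_apply]
  push_cast
  linear_combination (6 * |t| * max 0 (1 - t ^ 2) ^ 2) * sq_abs t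

theorem abs_deriv_mul_abs_mul_phi_le (t : ℝ) :
    |2 * |t| * max 0 (1 - t ^ 2) ^ 3 - 6 * |t| ^ 3 * max 0 (1 - t ^ 2) ^ 2| ≤ 6 := by
  rcases le_or_gt (1 - t ^ 2) 0 with hM | hM
  · simp [max_eq_left hM]
  · rw [max_eq_right hM.le]
    have ht : |t| ≤ 1 := (sq_le_one_iff_abs_le_one t).mp (by linarith)
    have hM1 : 1 - t ^ 2 ≤ 1 := by linarith [sq_nonneg t]
    have hfirst : 0 ≤ 2 * |t| * (1 - t ^ 2) ^ 3 := by positivity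
    have hsecond : 0 ≤ 6 * |t| ^ 3 * (1 - t ^ 2) ^ 2 := by positivity
    have hfirst_le : 2 * |t| * (1 - t ^ 2) ^ 3 ≤ 2 * 1 * 1 := by
      gcongr
      exact pow_le_one₀ hM.le hM1
    have hsecond_le : 6 * |t| ^ 3 * (1 - t ^ 2) ^ 2 ≤ 6 * 1 * 1 := by
      gcongr
      · exact pow_le_one₀ (abs_nonneg t) ht
      · exact pow_le_one₀ hM.le hM1
    -- both terms are nonnegative, so their difference is bounded by the larger one
    rw [abs_sub_le_iff]
    constructor <;> linarith

theorem lipschitzWith_mul_abs_mul_phi : LipschitzWith 6 fun t : ℝ => t * |t| * phi t :=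
  lipschitzWith_of_nnnorm_deriv_le (fun t => (hasDerivAt_mul_abs_mul_phi t).differentiableAt)
    fun t => by
      rw [(hasDerivAt_mul_abs_mul_phi t).deriv, ← NNReal.coe_le_coe, coe_nnnorm, Real.norm_eq_abs]
      exact abs_deriv_mul_abs_mul_phi_le t

theorem lipschitzWith_transformG_sub_self (ξ α : ℝ) {c : ℝ} (hc : 0 < c) :
    LipschitzWith ⟨6 * |α| * c, by positivity⟩ fun x => transformG ξ α c x - x := by
  refine LipschitzWith.of_dist_le_mul fun x y => ?_
  have hscale : ∀ u, u * |u| * phi (u / c) = c ^ 2 * (u / c * |u / c| * phi (u / c)) := by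
    intro u
    rw [abs_div, abs_of_pos hc]
    field_simp
  have hprofile := lipschitzWith_mul_abs_mul_phi.dist_le_mul ((x - ξ) / c) ((y - ξ) / c)
  simp only [transformG, add_sub_cancel_left, Real.dist_eq, hscale, ← mul_sub, abs_mul,
    NNReal.coe_ofNat] at hprofile ⊢
  calc |α| * (|c ^ 2| * |_ - _|) ≤ |α| * (|c ^ 2| * (6 * |(x - ξ) / c - (y - ξ) / c|)) := by
        gcongr
    _ = 6 * |α| * c * |x - y| := by
        rw [← sub_div, sub_sub_sub_cancel_right, abs_div, abs_pow, abs_of_pos hc]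
        field_simp

/-- if `6|α|c < 1` then `G` is Lipschitz with constant `1 + 6|α|c`
and `G⁻¹` is Lipschitz with constant `(1 - 6|α|c)⁻¹`. -/
theorem transformG_lipschitz (ξ α c : ℝ) (hc : 0 < c) (h : 6 * |α| * c < 1) :
    (∀ x y : ℝ, |transformG ξ α c x - transformG ξ α c y| ≤ (1 + 6 * |α| * c) * |x - y|) ∧
    (∀ x y : ℝ, |Function.invFun (transformG ξ α c) x - Function.invFun (transformG ξ α c) y|
      ≤ (1 - 6 * |α| * c)⁻¹ * |x - y|) := by
  set K : ℝ≥0 := ⟨6 * |α| * c, by positivity⟩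
  have hK : (K : ℝ) = 6 * |α| * c := rfl
  have hK_lt : K < 1 := h
  have hpert : LipschitzWith K fun x => transformG ξ α c x - x :=
    lipschitzWith_transformG_sub_self ξ α hc
  have hG : (fun x => x + (transformG ξ α c x - x)) = transformG ξ α c :=
    funext fun x => add_sub_cancel x _
  have hfwd := LipschitzWith.id.add hpert
  have hinv := hpert.lipschitzWith_invFun_id_add hK_lt
  simp only [id, hG] at hfwd hinv
  refine ⟨fun x y => ?_, fun x y => ?_⟩
  · simpa [Real.dist_eq, hK] using hfwd.dist_le_mul x y
  · simpa [Real.dist_eq, NNReal.coe_sub hK_lt.le, hK] using hinv.dist_le_mul x y
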